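/- arXiv:1901.03098 — 5 statements merged into one kernel-verified Lean document; each statement's English description precedes it below -/
import Mathlib

section
/- The Apéry numbers b_n = \sum_{k=0}^n \binom{n}{k}^2 \binom{n+k}{k} satisfy the recurrence (n+1)^2 b_{n+1} - (11n^2+11n+3) b_n - n^2 b_{n-1} = 0 for all n \ge 1, together with b_0 = 1 and b_1 = 3. -/
/-- The Apéry numbers `b n = ∑ k, (n choose k)^2 * ((n+k) choose k)`. -/
def aperyB (n : ℕ) : ℤ :=
  ∑ k ∈ Finset.range (n + 1), (n.choose k : ℤ) ^ 2 * ((n + k).choose k : ℤ)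

/-!
Creative telescoping (Zeilberger). Write `F n k` for the summand and `n = m + 1`. The recurrence
operator applied to `F · (j + 1)` equals `G n (j + 1) - G n j`, where `G n k = F n k * p(n, k + 1)`
for an explicit quadratic polynomial `p`; at `k = 0` it equals `G n 0`. Summing over `k` telescopes
to `G n (n + 1) = 0`. The per-`k` identity is checked by expressing `F (m + 2) (j + 1)`,
`F (m + 1) (j + 1)` and `F m (j + 1)` as polynomial multiples of `F (m + 1) j` divided by
`(j + 1) ^ 3` (and `m + 1`), which reduces it to a polynomial identity.
-/

open Finset

section CastChoose

variable {R : Type*} [CommRing R]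

/-! With subtraction in `R`, these hold for all `k`: past the range both sides vanish. -/

theorem Nat.cast_choose_succ_right_mul (n k : ℕ) :
    (n.choose (k + 1) : R) * (k + 1) = n.choose k * (n - k) := by
  rcases le_or_gt k n with hkn | hnk
  · have h := congrArg (Nat.cast : ℕ → R) (Nat.choose_succ_right_eq n k)
    push_cast [Nat.cast_sub hkn] at h
    exact h
  · simp [Nat.choose_eq_zero_of_lt hnk, Nat.choose_eq_zero_of_lt (Nat.lt_succ_of_lt hnk)]

theorem Nat.cast_choose_mul_succ (n k : ℕ) :
    (n.choose k : R) * (n + 1) = (n + 1).choose k * (n + 1 - k) := by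
  rcases le_or_gt k (n + 1) with hkn | hnk
  · have h := congrArg (Nat.cast : ℕ → R) (Nat.choose_mul_succ_eq n k)
    push_cast [Nat.cast_sub hkn] at h
    exact h
  · simp [Nat.choose_eq_zero_of_lt hnk, Nat.choose_eq_zero_of_lt (Nat.lt_of_succ_lt hnk)]

theorem Nat.cast_add_one_mul_choose (n k : ℕ) :
    ((n : R) + 1) * n.choose k = (n + 1).choose (k + 1) * (k + 1) := by
  have h := congrArg (Nat.cast : ℕ → R) (Nat.add_one_mul_choose_eq n k)
  push_cast at h
  exact h

end CastChoose

def aperyTerm (n k : ℕ) : ℤ := (n.choose k : ℤ) ^ 2 * ((n + k).choose k : ℤ)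

theorem aperyTerm_eq_zero_of_lt {n k : ℕ} (h : n < k) : aperyTerm n k = 0 := by
  simp [aperyTerm, Nat.choose_eq_zero_of_lt h]

theorem aperyB_eq_sum_range {n N : ℕ} (h : n < N) :
    aperyB n = ∑ k ∈ range N, aperyTerm n k :=
  sum_subset (range_subset_range.mpr h) fun _ _ hk => aperyTerm_eq_zero_of_lt (by simpa using hk)

theorem aperyTerm_add_two_succ_mul (m j : ℕ) :
    aperyTerm (m + 2) (j + 1) * ((j : ℤ) + 1) ^ 3
      = aperyTerm (m + 1) j * (((m : ℤ) + 2) * (m + j + 2) * (m + j + 3)) := by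
  have h₁ : ((m : ℤ) + 2) * (m + 1).choose j = (m + 2).choose (j + 1) * (j + 1) :=
    Nat.cast_add_one_mul_choose (m + 1) j
  have h₂ := Nat.cast_add_one_mul_choose (R := ℤ) (m + j + 1 + 1) j
  have h₃ := Nat.cast_choose_mul_succ (R := ℤ) (m + j + 1) j
  simp only [aperyTerm]
  rw [show m + 2 + (j + 1) = m + j + 1 + 1 + 1 by omega, show m + 1 + j = m + j + 1 by omega]
  push_cast at h₂ h₃ ⊢
  calc _ = (((m + 2).choose (j + 1) : ℤ) * (j + 1)) ^ 2
          * (((m + j + 1 + 1 + 1).choose (j + 1) : ℤ) * (j + 1)) := by ring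
    _ = ((m + 2) * (m + 1).choose j) ^ 2 * ((m + j + 3) * (m + j + 1 + 1).choose j) := by
        rw [← h₁, ← h₂]; ring
    _ = _ := by linear_combination (-((m : ℤ) + 2) * (m + j + 3) * (m + 1).choose j ^ 2) * h₃

theorem aperyTerm_add_one_succ_mul (m j : ℕ) :
    aperyTerm (m + 1) (j + 1) * ((j : ℤ) + 1) ^ 3
      = aperyTerm (m + 1) j * (((m : ℤ) + 1 - j) ^ 2 * (m + j + 2)) := by
  have h₁ := Nat.cast_choose_succ_right_mul (R := ℤ) (m + 1) j
  have h₂ := Nat.cast_add_one_mul_choose (R := ℤ) (m + j + 1) j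
  simp only [aperyTerm]
  rw [show m + 1 + (j + 1) = m + j + 1 + 1 by omega, show m + 1 + j = m + j + 1 by omega]
  push_cast at h₁ h₂ ⊢
  calc _ = (((m + 1).choose (j + 1) : ℤ) * (j + 1)) ^ 2
          * (((m + j + 1 + 1).choose (j + 1) : ℤ) * (j + 1)) := by ring
    _ = _ := by rw [h₁, ← h₂]; ring

theorem aperyTerm_succ_mul (m j : ℕ) :
    aperyTerm m (j + 1) * (((m : ℤ) + 1) * ((j : ℤ) + 1) ^ 3)
      = aperyTerm (m + 1) j * (((m : ℤ) + 1 - j) ^ 2 * (m - j) ^ 2) := by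
  have h₁ := Nat.cast_choose_succ_right_mul (R := ℤ) m j
  have h₂ := Nat.cast_choose_mul_succ (R := ℤ) m j
  have h₃ := Nat.cast_choose_succ_right_mul (R := ℤ) (m + j + 1) j
  simp only [aperyTerm]
  rw [show m + (j + 1) = m + j + 1 by omega, show m + 1 + j = m + j + 1 by omega]
  push_cast at h₁ h₂ h₃ ⊢
  calc _ = ((m.choose (j + 1) : ℤ) * (j + 1)) ^ 2
          * (((m + j + 1).choose (j + 1) : ℤ) * (j + 1)) * (m + 1) := by ring
    _ = (m.choose j * ((m : ℤ) + 1)) ^ 2 * ((m + j + 1).choose j) * (m - j) ^ 2 := by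
        rw [h₁, h₃]; ring
    _ = _ := by rw [h₂]; ring

/-- Zeilberger's certificate for `aperyTerm`, as produced by Gosper's algorithm. -/
def aperyCert (n k : ℕ) : ℤ :=
  aperyTerm n k * (((k : ℤ) + 1) ^ 2 + (6 * n + 1) * (k + 1) - (11 * n ^ 2 + 15 * n + 4))

theorem aperyCert_eq_zero_of_lt {n k : ℕ} (h : n < k) : aperyCert n k = 0 := by
  simp [aperyCert, aperyTerm_eq_zero_of_lt h]

theorem aperyCert_zero (m : ℕ) :
    ((m : ℤ) + 2) ^ 2 * aperyTerm (m + 2) 0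
      - (11 * ((m : ℤ) + 1) ^ 2 + 11 * (m + 1) + 3) * aperyTerm (m + 1) 0
      - ((m : ℤ) + 1) ^ 2 * aperyTerm m 0 = aperyCert (m + 1) 0 := by
  simp only [aperyCert, aperyTerm, Nat.choose_zero_right]
  push_cast
  ring

theorem aperyCert_succ_sub (m j : ℕ) :
    ((m : ℤ) + 2) ^ 2 * aperyTerm (m + 2) (j + 1)
      - (11 * ((m : ℤ) + 1) ^ 2 + 11 * (m + 1) + 3) * aperyTerm (m + 1) (j + 1)
      - ((m : ℤ) + 1) ^ 2 * aperyTerm m (j + 1)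
      = aperyCert (m + 1) (j + 1) - aperyCert (m + 1) j := by
  refine mul_right_cancel₀ (pow_ne_zero 3 (by positivity : (j : ℤ) + 1 ≠ 0)) ?_
  simp only [aperyCert]
  push_cast
  linear_combination ((m : ℤ) + 2) ^ 2 * aperyTerm_add_two_succ_mul m j
    - (11 * ((m : ℤ) + 1) ^ 2 + 11 * (m + 1) + 3
        + ((j + 2) ^ 2 + (6 * (m + 1) + 1) * (j + 2) - (11 * (m + 1) ^ 2 + 15 * (m + 1) + 4)))
      * aperyTerm_add_one_succ_mul m j
    - ((m : ℤ) + 1) * aperyTerm_succ_mul m j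

theorem aperyB_add_two_recurrence (m : ℕ) :
    ((m : ℤ) + 2) ^ 2 * aperyB (m + 2)
      - (11 * ((m : ℤ) + 1) ^ 2 + 11 * (m + 1) + 3) * aperyB (m + 1)
      - ((m : ℤ) + 1) ^ 2 * aperyB m = 0 := by
  rw [aperyB_eq_sum_range (N := m + 3) (by omega), aperyB_eq_sum_range (N := m + 3) (by omega),
    aperyB_eq_sum_range (N := m + 3) (by omega), mul_sum, mul_sum, mul_sum, ← sum_sub_distrib,
    ← sum_sub_distrib, sum_range_succ', aperyCert_zero]
  simp only [aperyCert_succ_sub]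
  rw [sum_range_sub, aperyCert_eq_zero_of_lt (by omega)]
  ring

theorem apery_b_recurrence :
    aperyB 0 = 1 ∧ aperyB 1 = 3 ∧
      ∀ n : ℕ, 1 ≤ n →
        ((n : ℤ) + 1) ^ 2 * aperyB (n + 1) - (11 * (n : ℤ) ^ 2 + 11 * n + 3) * aperyB n
          - (n : ℤ) ^ 2 * aperyB (n - 1) = 0 := by
  refine ⟨rfl, rfl, fun n hn => ?_⟩
  obtain ⟨m, rfl⟩ : ∃ m, n = m + 1 := ⟨n - 1, by omega⟩
  have h := aperyB_add_two_recurrence m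
  push_cast
  simpa only [Nat.add_sub_cancel, add_assoc, one_add_one_eq_two] using h
end

section
/- The sequence F(n) = \sum_{k=0}^n (-1)^k 8^{n-k} \binom{n}{k} \sum_{j=0}^k \binom{k}{j}^3 satisfies the recurrence (n+1)^2 F(n+1) - (17n^2+17n+6) F(n) + 72 n^2 F(n-1) = 0 for all n \ge 1, together with F(0) = 1 and F(1) = 6. -/
/-!
The Franel numbers `f` satisfy Zagier's recurrence
`(n+1)^2 u(n+1) - (A n^2 + A n + B) u(n) + C n^2 u(n-1) = 0` for `(A, B, C) = (7, 2, -8)`;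
this is creative telescoping with Zeilberger's certificate.

If `a` is a root of `x^2 - A x + C`, the binomial transform `∑ₖ (-1)^k a^(n-k) (n choose k) u(k)`
of a solution for `(A, B, C)` is a solution for `(3a - A, a - B, a^2 - C)`: the kernel
`(-1)^k a^(n-k) (n choose k)`, as a function of `n`, is sent by the new recurrence operator to
what the adjoint of the old operator gives as a function of `k`, so summation by parts moves the
operator onto `u`. Since `F` is the transform of `f` with `a = 8`, it solves the recurrence for
`(3·8 - 7, 8 - 2, 8^2 + 8) = (17, 6, 72)`.
-/

/-- The sporadic sequence for the Zagier triple (17,6,72):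
`F n = ∑ k, (-1)^k 8^(n-k) (n choose k) ∑ j, (k choose j)^3`. -/
def sporadicF (n : ℕ) : ℤ :=
  ∑ k ∈ Finset.range (n + 1),
    (-1 : ℤ) ^ k * 8 ^ (n - k) * (n.choose k : ℤ) *
      ∑ j ∈ Finset.range (k + 1), (k.choose j : ℤ) ^ 3

open Finset

section Binomial

variable {R : Type*} [CommRing R]

theorem succ_mul_choose_succ_eq_sub_mul_choose (n k : ℕ) :
    ((k : R) + 1) * n.choose (k + 1) = ((n : R) - k) * n.choose k := by
  rcases le_or_gt k n with hk | hk
  · have := congrArg (Nat.cast : ℕ → R) (Nat.choose_succ_right_eq n k)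
    push_cast [hk] at this
    linear_combination this
  · simp [Nat.choose_eq_zero_of_lt hk, Nat.choose_eq_zero_of_lt (hk.trans (Nat.lt_succ_self k))]

theorem mul_choose_pred_eq_succ_mul_choose_succ (n k : ℕ) :
    (n : R) * (n - 1).choose k = ((k : R) + 1) * n.choose (k + 1) := by
  cases n with
  | zero => simp
  | succ m =>
    have := congrArg (Nat.cast : ℕ → R) (Nat.add_one_mul_choose_eq m k)
    push_cast at this
    rw [Nat.add_sub_cancel, Nat.cast_succ]
    linear_combination this

theorem pow_sub_mul_choose_succ (a : R) (n k : ℕ) :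
    a ^ (n - k) * n.choose (k + 1) = a * a ^ (n - (k + 1)) * n.choose (k + 1) := by
  rcases lt_or_ge k n with hk | hk
  · rw [← pow_succ', Nat.sub_add_eq, Nat.sub_add_cancel (Nat.sub_pos_of_lt hk)]
  · simp [Nat.choose_eq_zero_of_lt (Nat.lt_succ_of_le hk)]

end Binomial

section AperyLike

variable {R : Type*} [CommRing R]

/-- At `n = 0` the junk value `u (0 - 1) = u 0` is multiplied by `0`. -/
def aperyOp (A B C : R) (u : ℕ → R) (n : ℕ) : R :=
  ((n : R) + 1) ^ 2 * u (n + 1) - (A * (n : R) ^ 2 + A * n + B) * u n + C * (n : R) ^ 2 * u (n - 1)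

def aperyAdjoint (A B C : R) (b : ℕ → R) (k : ℕ) : R :=
  (k : R) ^ 2 * b (k - 1) - (A * (k : R) ^ 2 + A * k + B) * b k + C * ((k : R) + 1) ^ 2 * b (k + 1)

theorem sum_mul_aperyOp (A B C : R) (b u : ℕ → R) (M : ℕ) (hM : b M = 0) (hM' : b (M + 1) = 0) :
    ∑ k ∈ range (M + 1), b k * aperyOp A B C u k
      = ∑ k ∈ range (M + 1), aperyAdjoint A B C b k * u k := by
  have hup : ∑ k ∈ range (M + 1), b k * (((k : R) + 1) ^ 2 * u (k + 1))
      = ∑ k ∈ range (M + 1), (k : R) ^ 2 * b (k - 1) * u k := by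
    rw [sum_range_succ, sum_range_succ', hM]
    simpa using sum_congr rfl fun k _ => by ring
  have hdown : ∑ k ∈ range (M + 1), b k * (C * (k : R) ^ 2 * u (k - 1))
      = ∑ k ∈ range (M + 1), C * ((k : R) + 1) ^ 2 * b (k + 1) * u k := by
    rw [sum_range_succ', sum_range_succ, hM']
    simpa using sum_congr rfl fun k _ => by ring
  calc ∑ k ∈ range (M + 1), b k * aperyOp A B C u k
      = ∑ k ∈ range (M + 1), (b k * (((k : R) + 1) ^ 2 * u (k + 1))
          - (A * (k : R) ^ 2 + A * k + B) * b k * u k + b k * (C * (k : R) ^ 2 * u (k - 1))) :=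
        sum_congr rfl fun k _ => by rw [aperyOp]; ring
    _ = ∑ k ∈ range (M + 1), ((k : R) ^ 2 * b (k - 1) * u k
          - (A * (k : R) ^ 2 + A * k + B) * b k * u k + C * ((k : R) + 1) ^ 2 * b (k + 1) * u k) := by
        simp only [sum_add_distrib, sum_sub_distrib, hup, hdown]
    _ = ∑ k ∈ range (M + 1), aperyAdjoint A B C b k * u k :=
        sum_congr rfl fun k _ => by rw [aperyAdjoint]; ring

end AperyLike

section BinomialTransform

variable {R : Type*} [CommRing R]

def binomialKernel (a : R) (n k : ℕ) : R := (-1) ^ k * a ^ (n - k) * n.choose k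

def binomialTransform (a : R) (u : ℕ → R) (n : ℕ) : R :=
  ∑ k ∈ range (n + 1), binomialKernel a n k * u k

theorem binomialKernel_eq_zero_of_lt (a : R) {n k : ℕ} (h : n < k) : binomialKernel a n k = 0 := by
  simp [binomialKernel, Nat.choose_eq_zero_of_lt h]

theorem binomialKernel_succ_zero (a : R) (n : ℕ) :
    binomialKernel a (n + 1) 0 = a * binomialKernel a n 0 := by
  simp [binomialKernel, pow_succ']

theorem binomialKernel_succ_succ (a : R) (n k : ℕ) :
    binomialKernel a (n + 1) (k + 1) = a * binomialKernel a n (k + 1) - binomialKernel a n k := by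
  have := pow_sub_mul_choose_succ a n k
  simp only [binomialKernel, Nat.choose_succ_succ', Nat.add_sub_add_right, pow_succ]
  push_cast
  linear_combination (-(-1) ^ k : R) * this

theorem succ_mul_binomialKernel_succ (a : R) (n k : ℕ) :
    ((k : R) + 1) * binomialKernel a n (k + 1) = -(n : R) * binomialKernel a (n - 1) k := by
  have := mul_choose_pred_eq_succ_mul_choose_succ (R := R) n k
  simp only [binomialKernel, Nat.sub_sub, add_comm 1 k, pow_succ]
  linear_combination ((-1) ^ k * a ^ (n - (k + 1)) : R) * this

theorem mul_succ_mul_binomialKernel_succ (a : R) (n k : ℕ) :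
    a * ((k : R) + 1) * binomialKernel a n (k + 1) = -((n : R) - k) * binomialKernel a n k := by
  have h1 := pow_sub_mul_choose_succ a n k
  have h2 := succ_mul_choose_succ_eq_sub_mul_choose (R := R) n k
  simp only [binomialKernel, pow_succ]
  linear_combination ((-1) ^ k : R) * ((k : R) + 1) * h1 + (-(-1) ^ k * a ^ (n - k) : R) * h2

/-- Pascal's rule removes `b (n + 1) k`, absorption removes `b (n - 1) k`, and the ratios of
neighbours in row `n` leave only `b n k`; `hC` makes the coefficient of `b n (k + 1)` divisible
by `a`, which is what that last step needs. -/
theorem aperyOp_binomialKernel (a A B C : R) (hC : a ^ 2 - A * a + C = 0) (n k : ℕ) :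
    aperyOp (3 * a - A) (a - B) (a ^ 2 - C) (binomialKernel a · k) n
      = -aperyAdjoint A B C (binomialKernel a n) k := by
  cases k with
  | zero =>
    have pascal := binomialKernel_succ_zero a n
    have absorb := succ_mul_binomialKernel_succ a n 0
    have ratio := mul_succ_mul_binomialKernel_succ a n 0
    rw [aperyOp, aperyAdjoint]
    push_cast at absorb ratio ⊢
    linear_combination ((n : R) + 1) ^ 2 * pascal + (a ^ 2 - C) * n * absorb
      + (1 + n) * binomialKernel a n 1 * hC + ((1 + n) * A - (2 * n + 1) * a) * ratio
  | succ j =>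
    have pascal := binomialKernel_succ_succ a n j
    have absorb := succ_mul_binomialKernel_succ a n (j + 1)
    have ratio := mul_succ_mul_binomialKernel_succ a n j
    have ratio' := mul_succ_mul_binomialKernel_succ a n (j + 1)
    rw [aperyOp, aperyAdjoint, Nat.add_sub_cancel]
    push_cast at absorb ratio ratio' ⊢
    linear_combination ((n : R) + 1) ^ 2 * pascal + (a ^ 2 - C) * n * absorb
      + ((j : R) + 2) * (j + 2 + n) * binomialKernel a n (j + 2) * hC
      + ((j + 2 + n) * A - (j + 2 + 2 * n) * a) * ratio' - (n + 2 + j) * ratio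

theorem binomialTransform_eq_sum_range (a : R) (u : ℕ → R) {m N : ℕ} (h : m < N) :
    binomialTransform a u m = ∑ k ∈ range N, binomialKernel a m k * u k :=
  (eventually_constant_sum (fun k hk => by rw [binomialKernel_eq_zero_of_lt a hk, zero_mul]) h).symm

theorem aperyOp_binomialTransform (a A B C : R) (hC : a ^ 2 - A * a + C = 0) (u : ℕ → R) (n : ℕ) :
    aperyOp (3 * a - A) (a - B) (a ^ 2 - C) (binomialTransform a u) n
      = -∑ k ∈ range (n + 2), binomialKernel a n k * aperyOp A B C u k := by
  calc aperyOp (3 * a - A) (a - B) (a ^ 2 - C) (binomialTransform a u) n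
      = ∑ k ∈ range (n + 2),
          aperyOp (3 * a - A) (a - B) (a ^ 2 - C) (binomialKernel a · k) n * u k := by
        rw [aperyOp, binomialTransform_eq_sum_range a u (N := n + 2) (by omega),
          binomialTransform_eq_sum_range a u (m := n) (N := n + 2) (by omega),
          binomialTransform_eq_sum_range a u (m := n - 1) (N := n + 2) (by omega),
          mul_sum, mul_sum, mul_sum, ← sum_sub_distrib, ← sum_add_distrib]
        exact sum_congr rfl fun k _ => by rw [aperyOp]; ring
    _ = -∑ k ∈ range (n + 2), aperyAdjoint A B C (binomialKernel a n) k * u k := by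
        simp only [aperyOp_binomialKernel a A B C hC, neg_mul, sum_neg_distrib]
    _ = -∑ k ∈ range (n + 2), binomialKernel a n k * aperyOp A B C u k := by
        rw [sum_mul_aperyOp A B C _ u (n + 1) (binomialKernel_eq_zero_of_lt a (by omega))
          (binomialKernel_eq_zero_of_lt a (by omega))]

end BinomialTransform

section Franel

def franel (k : ℕ) : ℤ := ∑ j ∈ range (k + 1), (k.choose j : ℤ) ^ 3

/-- Zeilberger's certificate for the Franel recurrence: `franelCert k j` is
`C(k, j-1)^3 Q(k, j) - 4 k^2 C(k-1, j-1)^3` with `Q(k, j) = -10 + 15j - 6j^2 - 20k + 15kj - 10k^2`. -/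
def franelCert (k : ℕ) : ℕ → ℤ
  | 0 => 0
  | j + 1 => (k.choose j : ℤ) ^ 3 * (-1 + 3 * j - 6 * j ^ 2 - 5 * k + 15 * k * j - 10 * k ^ 2)
      - 4 * k ^ 2 * ((k - 1).choose j : ℤ) ^ 3

theorem aperyOp_choose_pow_three (j k : ℕ) :
    aperyOp 7 2 (-8) (fun m => (m.choose j : ℤ) ^ 3) k = franelCert k (j + 1) - franelCert k j := by
  cases j with
  | zero =>
    simp only [aperyOp, franelCert, Nat.choose_zero_right]
    push_cast
    ring
  | succ i =>
    have pascal : ((k + 1).choose (i + 1) : ℤ) = k.choose i + k.choose (i + 1) := by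
      exact_mod_cast Nat.choose_succ_succ' k i
    have pascal_pred :
        (k : ℤ) * k.choose (i + 1) = k * ((k - 1).choose i + (k - 1).choose (i + 1)) := by
      cases k with
      | zero => simp
      | succ m => simp [Nat.choose_succ_succ']
    have absorb := mul_choose_pred_eq_succ_mul_choose_succ (R := ℤ) k i
    have ratio := succ_mul_choose_succ_eq_sub_mul_choose (R := ℤ) k i
    simp only [aperyOp, franelCert, pascal]
    set K : ℤ := (k : ℤ)
    set J : ℤ := (i : ℤ) + 1
    set p : ℤ := (k.choose i : ℤ)
    set q : ℤ := (k.choose (i + 1) : ℤ)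
    set s : ℤ := ((k - 1).choose i : ℤ)
    set t : ℤ := ((k - 1).choose (i + 1) : ℤ)
    push_cast
    linear_combination
      6 * (-2 * K * q * s + (2 * K - J) * q ^ 2 - (K + 1) * p * q + (K + 1 - J) * p ^ 2) * absorb
      - 3 * (2 * K * q * s + (K + 1) * q ^ 2 - 2 * K * p * s + (K + 1) * p * q
        + (2 * J - 3 * K - 3) * p ^ 2) * ratio
      + 4 * K * (t ^ 2 - s * t + s ^ 2 + q * t - 2 * q * s + q ^ 2) * pascal_pred

theorem franel_eq_sum_range {m N : ℕ} (h : m < N) :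
    franel m = ∑ j ∈ range N, (m.choose j : ℤ) ^ 3 :=
  (eventually_constant_sum (fun j hj => by simp [Nat.choose_eq_zero_of_lt hj]) h).symm

theorem aperyOp_franel (k : ℕ) : aperyOp 7 2 (-8) franel k = 0 := by
  calc aperyOp 7 2 (-8) franel k
      = ∑ j ∈ range (k + 2), aperyOp 7 2 (-8) (fun m => (m.choose j : ℤ) ^ 3) k := by
        rw [aperyOp, franel_eq_sum_range (N := k + 2) (by omega),
          franel_eq_sum_range (m := k) (N := k + 2) (by omega),
          franel_eq_sum_range (m := k - 1) (N := k + 2) (by omega),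
          mul_sum, mul_sum, mul_sum, ← sum_sub_distrib, ← sum_add_distrib]
        rfl
    _ = franelCert k (k + 2) - franelCert k 0 := by
        simp only [aperyOp_choose_pow_three, sum_range_sub]
    _ = 0 := by
        simp [franelCert, Nat.choose_eq_zero_of_lt]

end Franel

theorem sporadicF_recurrence :
    sporadicF 0 = 1 ∧ sporadicF 1 = 6 ∧
      ∀ n : ℕ, 1 ≤ n →
        ((n : ℤ) + 1) ^ 2 * sporadicF (n + 1)
          - (17 * (n : ℤ) ^ 2 + 17 * n + 6) * sporadicF n
          + 72 * (n : ℤ) ^ 2 * sporadicF (n - 1) = 0 := by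
  refine ⟨rfl, rfl, fun n _ => ?_⟩
  have h := aperyOp_binomialTransform (8 : ℤ) 7 2 (-8) (by norm_num) franel n
  norm_num [aperyOp_franel] at h
  exact h
end

section
/- Let p be a prime and suppose \omega(t) = \sum_{n\ge 1} b_n t^{n-1} dt with b_n \in Z_p, and t(q) = \sum_{n \ge 1} A_n q^n with A_n \in Z_p, and write \omega(t(q)) = \sum_{n \ge 1} c_n q^{n-1} dq. Suppose there exist \alpha_p, \beta_p \in Z_p with p | \beta_p such that b_{mp^r} - \alpha_p b_{mp^{r-1}} + \beta_p b_{mp^{r-2}} \equiv 0 \pmod{p^r} for all positive integers m and r. Then c_{mp^r} - \alpha_p c_{mp^{r-1}} + \beta_p c_{mp^{r-2}} \equiv 0 \pmod{p^r} for all positive integers m and r. -/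
/-!
Let `F(t) = ∑ b_k t^k / k` be the formal primitive of `ω`; then `c_N / N` is the `N`-th
coefficient of `F(t(q))` over `ℚ_p`. Writing `c_N - α c_{N/p} + β c_{N/p²}` this way and
regrouping by `k` gives `N` times
`∑_k (b_k - α b_{k/p} + β b_{k/p²}) / k · [q^N] t^k`
`  + α ∑_k b_k ([q^N] t^{pk} - [q^N] t^k(q^p)) / (pk)`
`  - (β/p) ∑_k b_k ([q^N] t^{p²k} - [q^N] t^k(q^{p²})) / (pk)`.
The first sum is `p`-integral by hypothesis, the other two by the congruence
`s^{p^i k} ≡ s^k(q^{p^i}) mod p^{v_p(k)+1}`, which lifts `s^{p^i} ≡ s(q^{p^i}) mod p`; and `β/p`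
is integral. Hence `N` divides the combination, and `p^r ∣ N = m p^r`.
-/

/-- Extension of a sequence of `p`-adic integers to rational indices: indices that are not
positive integers give `0`. -/
noncomputable def extSeq {p : ℕ} [Fact p.Prime] (u : ℕ → ℤ_[p]) (x : ℚ) : ℤ_[p] :=
  if 0 < x ∧ x.den = 1 then u x.num.toNat else 0

/-- The power series `t(q) = ∑_{n ≥ 1} A_n qⁿ` built from the coefficients `A`. -/
noncomputable def tSeries {p : ℕ} [Fact p.Prime] (A : ℕ → ℤ_[p]) : PowerSeries ℤ_[p] :=
  PowerSeries.mk fun n => if n = 0 then 0 else A n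

open PowerSeries Finset

namespace PowerSeries

variable {R : Type*} [CommRing R]

theorem C_dvd_iff_forall_dvd_coeff {d : R} {f : R⟦X⟧} :
    C d ∣ f ↔ ∀ n, d ∣ coeff n f := by
  refine ⟨fun ⟨g, hg⟩ n => ⟨coeff n g, by rw [hg, coeff_C_mul]⟩, fun h => ?_⟩
  choose g hg using h
  exact ⟨mk g, by ext n; simp [hg]⟩

theorem coeff_pow_eq_zero_of_lt {f : R⟦X⟧} (hf : constantCoeff f = 0) {n N : ℕ} (h : N < n) :
    coeff N (f ^ n) = 0 :=
  X_pow_dvd_iff.mp (pow_dvd_pow_of_dvd (X_dvd_iff.mpr hf) n) N h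

theorem natCast_succ_mul_coeff_pow_mul_derivative (f : R⟦X⟧) (n N : ℕ) :
    ((n + 1 : ℕ) : R) * coeff N (f ^ n * d⁄dX R f) =
      ((N + 1 : ℕ) : R) * coeff (N + 1) (f ^ (n + 1)) := by
  have h := coeff_derivative (f ^ (n + 1)) N
  rw [Derivation.leibniz_pow, Nat.add_sub_cancel, smul_eq_mul, nsmul_eq_mul, ← map_natCast C,
    coeff_C_mul] at h
  rw [h]
  push_cast
  ring

end PowerSeries

theorem Finset.sum_range_comp_mul_eq {M : Type*} [AddCommMonoid M] {g : ℕ → M} {d n : ℕ}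
    (hd : d ≠ 0) (hg : ∀ k, g k ≠ 0 → d ∣ k ∧ k < n) :
    ∑ k ∈ range n, g (d * k) = ∑ k ∈ range n, g k := by
  refine sum_bij_ne_zero (fun k _ _ => d * k) (fun k _ hk => ?_)
    (fun _ _ _ _ _ _ h => Nat.eq_of_mul_eq_mul_left (Nat.pos_of_ne_zero hd) h)
    (fun k _ hk => ?_) (fun _ _ _ => rfl)
  · exact mem_range.mpr (hg _ hk).2
  · obtain ⟨⟨j, rfl⟩, hlt⟩ := hg k hk
    exact ⟨j, mem_range.mpr (lt_of_le_of_lt (Nat.le_mul_of_pos_left j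
      (Nat.pos_of_ne_zero hd)) hlt), hk, rfl⟩

namespace PadicInt

variable {p : ℕ} [Fact p.Prime]

theorem natCast_dvd_iff_toZMod_eq_zero {z : ℤ_[p]} : (p : ℤ_[p]) ∣ z ↔ toZMod z = 0 := by
  rw [← RingHom.mem_ker, ker_toZMod, maximalIdeal_eq_span_p, Ideal.mem_span_singleton]

theorem isUnit_natCast_of_not_dvd {u : ℕ} (hu : ¬p ∣ u) : IsUnit (u : ℤ_[p]) :=
  isUnit_iff.mpr (norm_natCast_eq_one_iff.mpr ((Nat.Prime.coprime_iff_not_dvd Fact.out).mpr hu))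

theorem natCast_dvd_pow_sub_expand (s : ℤ_[p]⟦X⟧) (i : ℕ) (hi : p ^ i ≠ 0) :
    (p : ℤ_[p]⟦X⟧) ∣ s ^ p ^ i - expand (p ^ i) hi s := by
  have hfrob : (map toZMod s) ^ p ^ i = expand (p ^ i) hi (map (toZMod (p := p)) s) := by
    have hid : iterateFrobenius (ZMod p) p i = RingHom.id _ := by
      ext x; simp [iterateFrobenius_def, ZMod.pow_card_pow]
    rw [← MvPowerSeries.map_iterateFrobenius_expand p (Fact.out : p.Prime).ne_zero, hid,
      MvPowerSeries.map_id]
    rfl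
  rw [← map_natCast C, C_dvd_iff_forall_dvd_coeff]
  intro n
  rw [natCast_dvd_iff_toZMod_eq_zero, ← coeff_map, map_sub, map_pow, map_expand, hfrob,
    sub_self, map_zero]

theorem natCast_mul_dvd_pow_sub_expand (s : ℤ_[p]⟦X⟧) (i k : ℕ) (hi : p ^ i ≠ 0) :
    ((p * k : ℕ) : ℤ_[p]⟦X⟧) ∣ s ^ (p ^ i * k) - expand (p ^ i) hi (s ^ k) := by
  rcases eq_or_ne k 0 with rfl | hk
  · simp
  obtain ⟨e, u, hu, rfl⟩ := Nat.exists_eq_pow_mul_and_not_dvd hk p (Fact.out : p.Prime).ne_one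
  have hunit : IsUnit ((u : ℕ) : ℤ_[p]⟦X⟧) := by
    simpa using (isUnit_natCast_of_not_dvd hu).map C
  have hlift := dvd_sub_pow_of_dvd_sub (natCast_dvd_pow_sub_expand (s ^ u) i hi) e
  rw [show ((p * (p ^ e * u) : ℕ) : ℤ_[p]⟦X⟧) = (p : ℤ_[p]⟦X⟧) ^ (e + 1) * u by push_cast; ring,
    hunit.mul_right_dvd]
  convert hlift using 2
  · ring
  · rw [← map_pow, ← pow_mul, mul_comm]

theorem norm_coe_div_natCast_le_one {z : ℤ_[p]} {n : ℕ} (h : (n : ℤ_[p]) ∣ z) :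
    ‖(z : ℚ_[p]) / n‖ ≤ 1 := by
  obtain ⟨w, rfl⟩ := h
  rcases eq_or_ne n 0 with rfl | hn
  · simp
  rw [coe_mul, coe_natCast, mul_div_cancel_left₀ _ (Nat.cast_ne_zero.mpr hn)]
  exact w.norm_le_one

theorem natCast_dvd_of_coe_eq_mul {z : ℤ_[p]} {n : ℕ} {x : ℚ_[p]} (h : (z : ℚ_[p]) = n * x)
    (hx : ‖x‖ ≤ 1) : (n : ℤ_[p]) ∣ z := by
  let w : ℤ_[p] := ⟨x, hx⟩
  exact ⟨w, PadicInt.ext (by rw [h, coe_mul, coe_natCast])⟩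

end PadicInt

section ThreeTermComb

variable {p : ℕ} [Fact p.Prime]

theorem extSeq_natCast (u : ℕ → ℤ_[p]) {n : ℕ} (hn : 0 < n) : extSeq u n = u n := by
  simp [extSeq, hn]

theorem extSeq_natCast_div_of_not_dvd (u : ℕ → ℤ_[p]) {N d : ℕ} (h : ¬d ∣ N) :
    extSeq u ((N : ℚ) / d) = 0 := by
  rcases eq_or_ne d 0 with rfl | hd
  · simp [extSeq]
  rw [extSeq, if_neg (fun h' => h ((Rat.den_div_natCast_eq_one_iff N d hd).mp h'.2))]

noncomputable def threeTermComb (u : ℕ → ℤ_[p]) (α β : ℤ_[p]) (N : ℕ) : ℤ_[p] :=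
  extSeq u N - α * extSeq u ((N : ℚ) / p) + β * extSeq u ((N : ℚ) / p ^ 2)

theorem threeTermComb_zero (u : ℕ → ℤ_[p]) (α β : ℤ_[p]) : threeTermComb u α β 0 = 0 := by
  simp [threeTermComb, extSeq]

theorem extSeq_sub_add_eq_threeTermComb (u : ℕ → ℤ_[p]) (α β : ℤ_[p]) (m r : ℕ) :
    extSeq u ((m : ℚ) * (p : ℚ) ^ (r : ℤ))
        - α * extSeq u ((m : ℚ) * (p : ℚ) ^ ((r : ℤ) - 1))
        + β * extSeq u ((m : ℚ) * (p : ℚ) ^ ((r : ℤ) - 2)) =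
      threeTermComb u α β (m * p ^ r) := by
  have hp : (p : ℚ) ≠ 0 := Nat.cast_ne_zero.mpr (Fact.out : p.Prime).ne_zero
  simp only [threeTermComb, zpow_sub₀ hp, zpow_natCast, zpow_one, Nat.cast_mul, Nat.cast_pow,
    mul_div_assoc]
  rfl

theorem natCast_dvd_threeTermComb_of_forall_pow_dvd {u : ℕ → ℤ_[p]} {α β : ℤ_[p]}
    (hu : ∀ m r : ℕ, 0 < m → 0 < r → (p : ℤ_[p]) ^ r ∣ threeTermComb u α β (m * p ^ r))
    (k : ℕ) : (k : ℤ_[p]) ∣ threeTermComb u α β k := by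
  rcases eq_or_ne k 0 with rfl | hk
  · simp [threeTermComb_zero]
  obtain ⟨e, m, hm, rfl⟩ := Nat.exists_eq_pow_mul_and_not_dvd hk p (Fact.out : p.Prime).ne_one
  rw [Nat.cast_mul, (PadicInt.isUnit_natCast_of_not_dvd hm).mul_right_dvd, Nat.cast_pow,
    Nat.mul_comm]
  rcases Nat.eq_zero_or_pos e with rfl | he
  · simp
  exact hu m e (Nat.pos_of_ne_zero (by rintro rfl; simp at hm)) he

end ThreeTermComb

section Pullback

variable {p : ℕ} [Fact p.Prime] {b A c : ℕ → ℤ_[p]}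

variable (b A c) in
/-- `ω(t(q)) = (∑ c_n q^{n-1}) dq` for `ω(t) = (∑ b_n t^{n-1}) dt` and `t = tSeries A`; only the
terms with `n ≤ N + 1` of `ω` matter for `c_{N+1}`, since `t(q)` has no constant term. -/
def IsPullbackCoeffs : Prop :=
  ∀ N : ℕ, c (N + 1) =
    coeff N ((∑ n ∈ range (N + 1), C (b (n + 1)) * tSeries A ^ n) * d⁄dX ℤ_[p] (tSeries A))

variable (A) in
theorem constantCoeff_tSeries : constantCoeff (tSeries A) = 0 := by
  rw [← coeff_zero_eq_constantCoeff_apply, tSeries, coeff_mk, if_pos rfl]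

theorem IsPullbackCoeffs.coe_eq_natCast_mul_sum (hsub : IsPullbackCoeffs b A c) {N : ℕ}
    (hN : 0 < N) :
    (c N : ℚ_[p]) = N * ∑ k ∈ range (N + 1),
      (b k : ℚ_[p]) / k * ((coeff N (tSeries A ^ k) : ℤ_[p]) : ℚ_[p]) := by
  obtain ⟨M, rfl⟩ : ∃ M, N = M + 1 := ⟨N - 1, by omega⟩
  rw [hsub M, sum_range_succ' (M := ℚ_[p]) _ (M + 1), Nat.cast_zero, div_zero, zero_mul, add_zero,
    mul_sum, sum_mul, map_sum]
  push_cast [PadicInt.coe_sum]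
  refine sum_congr rfl fun n _ => ?_
  have h := congrArg ((↑) : ℤ_[p] → ℚ_[p])
    (natCast_succ_mul_coeff_pow_mul_derivative (tSeries A) n M)
  rw [mul_assoc, coeff_C_mul]
  push_cast at h ⊢
  field_simp
  linear_combination (b (n + 1) : ℚ_[p]) * h

theorem IsPullbackCoeffs.coe_extSeq_div_eq_natCast_mul_sum (hsub : IsPullbackCoeffs b A c)
    {N d : ℕ} (hN : 0 < N) (hd : d ≠ 0) :
    (extSeq c ((N : ℚ) / d) : ℚ_[p]) = N * ∑ k ∈ range (N + 1),
      (b k : ℚ_[p]) / (d * k) * ((coeff N (expand d hd (tSeries A ^ k)) : ℤ_[p]) : ℚ_[p]) := by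
  by_cases hdN : d ∣ N
  · obtain ⟨M, rfl⟩ := hdN
    have hM : 0 < M := Nat.pos_of_mul_pos_left hN
    rw [show ((d * M : ℕ) : ℚ) / d = M by push_cast; field_simp, extSeq_natCast c hM,
      hsub.coe_eq_natCast_mul_sum hM, mul_sum, mul_sum]
    refine sum_subset (range_subset_range.mpr (by nlinarith [Nat.one_le_iff_ne_zero.mpr hd])) ?_
      |>.trans (sum_congr rfl fun k _ => ?_)
    · intro k _ hk
      rw [coeff_pow_eq_zero_of_lt (constantCoeff_tSeries A)
        (by simpa using hk), PadicInt.coe_zero, mul_zero, mul_zero]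
    · rw [coeff_expand_mul]
      push_cast
      field_simp
  · rw [extSeq_natCast_div_of_not_dvd c hdN]
    simp only [coeff_expand_of_not_dvd _ _ _ hdN, PadicInt.coe_zero, mul_zero, sum_const_zero]

variable (b A) in
theorem sum_extSeq_div_mul_coeff_pow_eq {d : ℕ} (hd : d ≠ 0) (N : ℕ) :
    ∑ k ∈ range (N + 1), (extSeq b ((k : ℚ) / d) : ℚ_[p]) / k *
        ((coeff N (tSeries A ^ k) : ℤ_[p]) : ℚ_[p]) =
      ∑ k ∈ range (N + 1), (b k : ℚ_[p]) / (d * k) *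
        ((coeff N (tSeries A ^ (d * k)) : ℤ_[p]) : ℚ_[p]) := by
  rw [← sum_range_comp_mul_eq hd]
  · refine sum_congr rfl fun k _ => ?_
    rcases Nat.eq_zero_or_pos k with rfl | hk
    · simp
    rw [show ((d * k : ℕ) : ℚ) / d = k by push_cast; field_simp, extSeq_natCast b hk]
    push_cast
    ring
  · intro k hk
    refine ⟨by_contra fun hdk => hk ?_, by_contra fun hkN => hk ?_⟩
    · rw [extSeq_natCast_div_of_not_dvd b hdk, PadicInt.coe_zero, zero_div, zero_mul]
    · rw [coeff_pow_eq_zero_of_lt (constantCoeff_tSeries A) (by omega), PadicInt.coe_zero,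
        mul_zero]

variable (b A) in
noncomputable def frobeniusDefectSum (i N : ℕ) : ℚ_[p] :=
  ∑ k ∈ range (N + 1), (b k : ℚ_[p]) *
    ((coeff N (tSeries A ^ (p ^ i * k)) -
      coeff N (expand (p ^ i) (pow_ne_zero i (Fact.out : p.Prime).ne_zero) (tSeries A ^ k)) :
        ℤ_[p]) : ℚ_[p]) / (p * k : ℕ)

theorem norm_frobeniusDefectSum_le_one (i N : ℕ) : ‖frobeniusDefectSum b A i N‖ ≤ 1 := by
  refine IsUltrametricDist.norm_sum_le_of_forall_le_of_nonneg zero_le_one fun k _ => ?_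
  have hdvd := PadicInt.natCast_mul_dvd_pow_sub_expand (tSeries A) i k
    (pow_ne_zero i (Fact.out : p.Prime).ne_zero)
  rw [← map_natCast (C (R := ℤ_[p])), C_dvd_iff_forall_dvd_coeff] at hdvd
  specialize hdvd N
  rw [map_sub] at hdvd
  rw [mul_div_assoc, norm_mul]
  exact mul_le_one₀ (b k).norm_le_one (norm_nonneg _) (PadicInt.norm_coe_div_natCast_le_one hdvd)

theorem IsPullbackCoeffs.coe_threeTermComb_eq (hsub : IsPullbackCoeffs b A c) (α β : ℤ_[p])
    {N : ℕ} (hN : 0 < N) :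
    (threeTermComb c α β N : ℚ_[p]) = N * (∑ k ∈ range (N + 1),
      (threeTermComb b α β k : ℚ_[p]) / k * ((coeff N (tSeries A ^ k) : ℤ_[p]) : ℚ_[p]) +
        α * frobeniusDefectSum b A 1 N - β / p * frobeniusDefectSum b A 2 N) := by
  have hp : p ≠ 0 := (Fact.out : p.Prime).ne_zero
  have hc0 := hsub.coe_extSeq_div_eq_natCast_mul_sum hN one_ne_zero
  have hc1 := hsub.coe_extSeq_div_eq_natCast_mul_sum hN (pow_ne_zero 1 hp)
  have hc2 := hsub.coe_extSeq_div_eq_natCast_mul_sum hN (pow_ne_zero 2 hp)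
  have hb1 := sum_extSeq_div_mul_coeff_pow_eq b A (pow_ne_zero 1 hp) N
  have hb2 := sum_extSeq_div_mul_coeff_pow_eq b A (pow_ne_zero 2 hp) N
  simp only [expand_one_apply, Nat.cast_one, div_one, one_mul, Nat.cast_pow, pow_one]
    at hc0 hc1 hc2 hb1 hb2
  simp only [threeTermComb, frobeniusDefectSum, pow_one]
  push_cast
  rw [hc0, hc1, hc2]
  -- `hb1`, `hb2` turn the `b_{k/p}`, `b_{k/p²}` parts of `threeTermComb b` into sums over
  -- `t^{pk}`, `t^{p²k}`; what remains is one sum over `k`, compared termwise.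
  linear_combination (norm := skip) (N * α : ℚ_[p]) * hb1 - (N * β : ℚ_[p]) * hb2
  simp only [mul_sum, ← sum_sub_distrib, ← sum_add_distrib]
  refine sum_eq_zero fun k _ => ?_
  rcases Nat.eq_zero_or_pos k with rfl | hk
  · simp
  rw [extSeq_natCast b hk]
  ring

theorem IsPullbackCoeffs.natCast_dvd_threeTermComb (hsub : IsPullbackCoeffs b A c)
    {α β : ℤ_[p]} (hβ : (p : ℤ_[p]) ∣ β) (hb : ∀ k : ℕ, (k : ℤ_[p]) ∣ threeTermComb b α β k)
    (N : ℕ) : (N : ℤ_[p]) ∣ threeTermComb c α β N := by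
  rcases Nat.eq_zero_or_pos N with rfl | hN
  · simp [threeTermComb_zero]
  refine PadicInt.natCast_dvd_of_coe_eq_mul (hsub.coe_threeTermComb_eq α β hN) ?_
  have hsum : ‖∑ k ∈ range (N + 1), (threeTermComb b α β k : ℚ_[p]) / k *
      ((coeff N (tSeries A ^ k) : ℤ_[p]) : ℚ_[p])‖ ≤ 1 :=
    IsUltrametricDist.norm_sum_le_of_forall_le_of_nonneg zero_le_one fun k _ => by
      rw [norm_mul]
      exact mul_le_one₀ (PadicInt.norm_coe_div_natCast_le_one (hb k)) (norm_nonneg _)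
        (PadicInt.norm_le_one _)
  have hα : ‖α * frobeniusDefectSum b A 1 N‖ ≤ 1 := by
    rw [norm_mul]
    exact mul_le_one₀ α.norm_le_one (norm_nonneg _) (norm_frobeniusDefectSum_le_one 1 N)
  have hβ' : ‖(β : ℚ_[p]) / p * frobeniusDefectSum b A 2 N‖ ≤ 1 := by
    rw [norm_mul]
    exact mul_le_one₀ (PadicInt.norm_coe_div_natCast_le_one hβ) (norm_nonneg _)
      (norm_frobeniusDefectSum_le_one 2 N)
  rw [sub_eq_add_neg]
  exact (IsUltrametricDist.norm_add_le_max _ _).trans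
    (max_le ((IsUltrametricDist.norm_add_le_max _ _).trans (max_le hsum hα)) (by rwa [norm_neg]))

end Pullback

/-- Beukers' proposition: if `ω(t) = (∑ b_n t^{n-1}) dt`, `t(q) = ∑ A_n qⁿ` and
`ω(t(q)) = (∑ c_n q^{n-1}) dq`, then three-term congruences mod `p^r` for the `b`'s
imply the corresponding congruences for the `c`'s.  The substitution hypothesis `hsub`
says that `c_{N+1}` is the `N`-th coefficient of `(∑_{n≥1} b_n t(q)^{n-1}) · t'(q)`
(only the terms with `n - 1 ≤ N` contribute, since `t(q)` has zero constant term). -/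
theorem beukers_congruence_transfer (p : ℕ) [Fact p.Prime]
    (b A c : ℕ → ℤ_[p]) (α β : ℤ_[p]) (hβ : (p : ℤ_[p]) ∣ β)
    (hsub : ∀ N : ℕ, c (N + 1) =
      PowerSeries.coeff N
        ((∑ n ∈ Finset.range (N + 1), PowerSeries.C (b (n + 1)) * (tSeries A) ^ n)
          * PowerSeries.derivative ℤ_[p] (tSeries A)))
    (hb : ∀ m r : ℕ, 0 < m → 0 < r →
      (p : ℤ_[p]) ^ r ∣
        extSeq b ((m : ℚ) * (p : ℚ) ^ (r : ℤ))
          - α * extSeq b ((m : ℚ) * (p : ℚ) ^ ((r : ℤ) - 1))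
          + β * extSeq b ((m : ℚ) * (p : ℚ) ^ ((r : ℤ) - 2))) :
    ∀ m r : ℕ, 0 < m → 0 < r →
      (p : ℤ_[p]) ^ r ∣
        extSeq c ((m : ℚ) * (p : ℚ) ^ (r : ℤ))
          - α * extSeq c ((m : ℚ) * (p : ℚ) ^ ((r : ℤ) - 1))
          + β * extSeq c ((m : ℚ) * (p : ℚ) ^ ((r : ℤ) - 2)) := by
  have hb' : ∀ k : ℕ, (k : ℤ_[p]) ∣ threeTermComb b α β k :=
    natCast_dvd_threeTermComb_of_forall_pow_dvd fun m r hm hr => by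
      simpa only [extSeq_sub_add_eq_threeTermComb] using hb m r hm hr
  intro m r _ _
  rw [extSeq_sub_add_eq_threeTermComb]
  have hpow : (p : ℤ_[p]) ^ r ∣ ((m * p ^ r : ℕ) : ℤ_[p]) := ⟨m, by push_cast; ring⟩
  exact hpow.trans (IsPullbackCoeffs.natCast_dvd_threeTermComb hsub hβ hb' _)
end

section
/- Let p \equiv 3 \pmod 4 be a prime with p \ge 5, and let b_n = \sum_{k=0}^n \binom{n}{k}^2 \binom{n+k}{k}. Then b_{(p-1)/2} \equiv 0 \pmod{p}. -/
/-- Wilson-type: `j! * (p-1-j)! ≡ (-1)^(j+1) (mod p)` for `j ≤ p - 1`. -/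
lemma fact_mul_fact_zmod (p : ℕ) [Fact p.Prime] :
    ∀ j, j ≤ p - 1 →
      ((j.factorial : ZMod p) * ((p - 1 - j).factorial : ZMod p)) = (-1) ^ (j + 1) := by
  have hp := (Fact.out : p.Prime)
  intro j
  induction j with
  | zero =>
    intro _
    simp [ZMod.wilsons_lemma]
  | succ j ih =>
    intro hj
    have hj' : j ≤ p - 1 := le_of_lt (lt_of_lt_of_le (Nat.lt_succ_self j) hj)
    have hjp : j + 1 < p := by omega
    have h1 : p - 1 - j = (p - 1 - (j + 1)) + 1 := by omega
    have h2 : (p - 1 - j).factorial = (p - 1 - j) * (p - 1 - (j + 1)).factorial := by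
      rw [h1, Nat.factorial_succ]
    have hIH := ih hj'
    rw [h2] at hIH
    push_cast at hIH
    have hcast : ((p - 1 - j : ℕ) : ZMod p) = -(j + 1 : ZMod p) := by
      have : (p - 1 - j : ℕ) = p - (j + 1) := by omega
      rw [this, Nat.cast_sub (by omega)]
      simp [ZMod.natCast_self]
    rw [hcast] at hIH
    rw [Nat.factorial_succ]
    push_cast
    calc ((j : ZMod p) + 1) * (j.factorial : ZMod p) * ((p - 1 - (j + 1)).factorial : ZMod p)
        = -((j.factorial : ZMod p) * (-((j : ZMod p) + 1) *
            ((p - 1 - (j + 1)).factorial : ZMod p))) := by ring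
      _ = -((-1) ^ (j + 1)) := by rw [hIH]
      _ = (-1) ^ (j + 1 + 1) := by ring

/-- Stienstra–Beukers: for a prime `p ≡ 3 (mod 4)`, `p ≥ 5`, the Apéry number
`b_{(p-1)/2}` is divisible by `p`. -/
theorem apery_b_vanishing (p : ℕ) (hp : p.Prime) (h4 : p % 4 = 3) (h5 : 5 ≤ p) :
    (p : ℤ) ∣ aperyB ((p - 1) / 2) := by
  haveI : Fact p.Prime := ⟨hp⟩
  set m := (p - 1) / 2 with hm
  have h2m : 2 * m = p - 1 := by omega
  have hmodd : Odd m := ⟨(p - 3) / 4, by omega⟩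
  rw [← ZMod.intCast_zmod_eq_zero_iff_dvd]
  -- key term congruence
  have key : ∀ k, k ≤ m →
      (((2 * m - k).choose m : ZMod p)) = -(((m + k).choose m : ZMod p)) := by
    intro k hk
    have hfac : ∀ n : ℕ, n < p → (n.factorial : ZMod p) ≠ 0 := by
      intro n hn
      rw [Ne, ZMod.natCast_eq_zero_iff]
      intro h
      exact absurd ((Nat.Prime.dvd_factorial hp).mp h) (by omega)
    have hu : (m.factorial : ZMod p) * ((m - k).factorial : ZMod p) *
        (k.factorial : ZMod p) ≠ 0 := by
      refine mul_ne_zero (mul_ne_zero (hfac m (by omega)) (hfac (m - k) (by omega)))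
        (hfac k (by omega))
    have e1 : (2 * m - k).choose m * m.factorial * (m - k).factorial =
        (2 * m - k).factorial := by
      have := Nat.choose_mul_factorial_mul_factorial (show m ≤ 2 * m - k by omega)
      rwa [show 2 * m - k - m = m - k by omega] at this
    have e2 : (m + k).choose m * m.factorial * k.factorial = (m + k).factorial := by
      have := Nat.choose_mul_factorial_mul_factorial (show m ≤ m + k by omega)
      rwa [show m + k - m = k by omega] at this
    have w1 : ((k.factorial : ZMod p) * ((2 * m - k).factorial : ZMod p)) = (-1) ^ (k + 1) := by
      have := fact_mul_fact_zmod p k (by omega)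
      rwa [show p - 1 - k = 2 * m - k by omega] at this
    have w2 : (((m - k).factorial : ZMod p) * ((m + k).factorial : ZMod p)) =
        (-1) ^ (m - k + 1) := by
      have := fact_mul_fact_zmod p (m - k) (by omega)
      rwa [show p - 1 - (m - k) = m + k by omega] at this
    have sign : ((-1 : ZMod p)) ^ (m - k + 1) = -(-1) ^ (k + 1) := by
      obtain ⟨t, ht⟩ := hmodd
      rcases Nat.even_or_odd k with hke | hko
      · obtain ⟨s, hs⟩ := hke
        rw [show m - k + 1 = 2 * (t - s) + 2 by omega, show k + 1 = 2 * s + 1 by omega]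
        simp [pow_add, pow_mul]
      · obtain ⟨s, hs⟩ := hko
        rw [show m - k + 1 = 2 * (t - s) + 1 by omega, show k + 1 = 2 * (s + 1) by omega]
        simp [pow_add, pow_mul]
    have c1 : ((2 * m - k).choose m : ZMod p) *
        ((m.factorial : ZMod p) * ((m - k).factorial : ZMod p) * (k.factorial : ZMod p)) =
        (-1) ^ (k + 1) := by
      rw [← w1]
      have := congrArg (fun n : ℕ => (n : ZMod p)) e1
      push_cast at this
      rw [show ((2 * m - k).choose m : ZMod p) *
        ((m.factorial : ZMod p) * ((m - k).factorial : ZMod p) * (k.factorial : ZMod p)) =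
        ((2 * m - k).choose m : ZMod p) * (m.factorial : ZMod p) * ((m - k).factorial : ZMod p)
          * (k.factorial : ZMod p) by ring, this]
      ring
    have c2 : ((m + k).choose m : ZMod p) *
        ((m.factorial : ZMod p) * ((m - k).factorial : ZMod p) * (k.factorial : ZMod p)) =
        (-1) ^ (m - k + 1) := by
      rw [← w2]
      have := congrArg (fun n : ℕ => (n : ZMod p)) e2
      push_cast at this
      rw [show ((m + k).choose m : ZMod p) *
        ((m.factorial : ZMod p) * ((m - k).factorial : ZMod p) * (k.factorial : ZMod p)) =
        ((m + k).choose m : ZMod p) * (m.factorial : ZMod p) * (k.factorial : ZMod p)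
          * ((m - k).factorial : ZMod p) by ring, this]
      ring
    have hz : (((2 * m - k).choose m : ZMod p) + ((m + k).choose m : ZMod p)) *
        ((m.factorial : ZMod p) * ((m - k).factorial : ZMod p) * (k.factorial : ZMod p)) = 0 := by
      rw [add_mul, c1, c2, sign]; ring
    have hz' := (mul_eq_zero.mp hz).resolve_right hu
    exact eq_neg_of_add_eq_zero_left hz'
  set S : ZMod p := ∑ k ∈ Finset.range (m + 1),
      (m.choose k : ZMod p) ^ 2 * ((m + k).choose k : ZMod p) with hS
  have hcast : ((aperyB m : ℤ) : ZMod p) = S := by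
    rw [hS]
    unfold aperyB
    push_cast
    rfl
  have hrefl := Finset.sum_range_reflect
    (fun k => (m.choose k : ZMod p) ^ 2 * ((m + k).choose k : ZMod p)) (m + 1)
  simp only [Nat.add_sub_cancel] at hrefl
  have step : ∀ k ∈ Finset.range (m + 1),
      (m.choose (m - k) : ZMod p) ^ 2 * ((m + (m - k)).choose (m - k) : ZMod p) =
      -((m.choose k : ZMod p) ^ 2 * ((m + k).choose k : ZMod p)) := by
    intro k hkmem
    rw [Finset.mem_range] at hkmem
    have hk : k ≤ m := by omega
    rw [Nat.choose_symm hk, show m + (m - k) = 2 * m - k by omega]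
    have e2 : (2 * m - k).choose (m - k) = (2 * m - k).choose m := by
      rw [← Nat.choose_symm (show m ≤ 2 * m - k by omega)]
      congr 1
      omega
    rw [e2, key k hk, show (m + k).choose m = (m + k).choose k from Nat.choose_symm_add]
    ring
  have hneg : S = -S := by
    conv_lhs => rw [hS, ← hrefl]
    rw [Finset.sum_congr rfl step, Finset.sum_neg_distrib, ← hS]
  have h2ne : (2 : ZMod p) ≠ 0 := by
    have : ((2 : ℕ) : ZMod p) ≠ 0 := by
      rw [Ne, ZMod.natCast_eq_zero_iff]
      intro h
      exact absurd (Nat.le_of_dvd (by omega) h) (by omega)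
    simpa using this
  have hS0 : S = 0 := by
    have h2 : (2 : ZMod p) * S = 0 := by
      rw [two_mul]
      nth_rewrite 1 [hneg]
      ring
    exact (mul_eq_zero.mp h2).resolve_left h2ne
  rw [hcast, hS0]
end

section
/- For a Zagier triple (A,B,C) \in Z^3, the recurrence (n+1)^2 u_{n+1} - (An^2+An+B) u_n + C n^2 u_{n-1} = 0 with u_0 = 1 determines the rational sequence (u_n) uniquely, and u_1 = B; moreover for (A,B,C) = (11,3,-1) the resulting sequence equals the Apéry numbers b_n = \sum_{k=0}^n \binom{n}{k}^2 \binom{n+k}{k}. -/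
open Finset Nat
def Fq (a k : ℕ) : ℚ := (a.choose k : ℚ)^2 * ((a+k).choose k : ℚ)

lemma fac_ne (n : ℕ) : ((n.factorial : ℚ)) ≠ 0 := by exact_mod_cast n.factorial_ne_zero

lemma Fq_eq (a k : ℕ) (h : k ≤ a) :
    Fq a k = ((a.factorial : ℚ) * ((a+k).factorial : ℚ)) /
      (((k.factorial : ℚ))^3 * (((a-k).factorial : ℚ))^2) := by
  unfold Fq
  rw [Nat.cast_choose ℚ h, Nat.cast_choose ℚ (Nat.le_add_left k a), Nat.add_sub_cancel]
  field_simp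

lemma Fq_zero (a k : ℕ) (h : a < k) : Fq a k = 0 := by
  simp [Fq, Nat.choose_eq_zero_of_lt h]

def g (m k : ℕ) : ℚ :=
  Fq (m+1) k * ((k:ℚ)^2 + 3*k + 6*((m:ℚ)+1)*k - 11*((m:ℚ)+1)^2 - 9*((m:ℚ)+1) - 2)

lemma caseB (m : ℕ) :
    ((m:ℚ)+2)^2 * Fq (m+2) (m+1)
      - (11*((m:ℚ)+1)^2+11*((m:ℚ)+1)+3) * Fq (m+1) (m+1)
      - ((m:ℚ)+1)^2 * Fq m (m+1)
    = g m (m+1) - g m m := by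
  unfold g
  rw [Fq_zero m (m+1) (by omega), Fq_eq (m+2) (m+1) (by omega),
    Fq_eq (m+1) (m+1) (by omega), Fq_eq (m+1) m (by omega),
    show m+2 - (m+1) = 1 from by omega, show m+1 - (m+1) = 0 from by omega,
    show m+1 - m = 1 from by omega]
  have e1 : ((m+2).factorial : ℚ) = ((m:ℚ)+2)*((m:ℚ)+1)*(m.factorial : ℚ) := by
    rw [show m+2 = (m+1)+1 from rfl, Nat.factorial_succ, Nat.factorial_succ]; push_cast; ring
  have e2 : ((m+1).factorial : ℚ) = ((m:ℚ)+1)*(m.factorial : ℚ) := by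
    rw [Nat.factorial_succ]; push_cast; ring
  have e3 : ((m+2+(m+1)).factorial : ℚ)
      = (2*(m:ℚ)+3)*(2*(m:ℚ)+2)*((m+1+m).factorial : ℚ) := by
    rw [show m+2+(m+1) = (m+1+m)+1+1 from by omega, Nat.factorial_succ, Nat.factorial_succ]
    push_cast; ring
  have e4 : ((m+1+(m+1)).factorial : ℚ) = (2*(m:ℚ)+2)*((m+1+m).factorial : ℚ) := by
    rw [show m+1+(m+1) = (m+1+m)+1 from by omega, Nat.factorial_succ]; push_cast; ring
  rw [e1, e3, e2, e4]
  have n1 := fac_ne m; have n2 := fac_ne (m+1+m)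
  push_cast
  field_simp
  ring

lemma caseC (m : ℕ) :
    ((m:ℚ)+2)^2 * Fq (m+2) (m+2)
      - (11*((m:ℚ)+1)^2+11*((m:ℚ)+1)+3) * Fq (m+1) (m+2)
      - ((m:ℚ)+1)^2 * Fq m (m+2)
    = g m (m+2) - g m (m+1) := by
  unfold g
  rw [Fq_zero m (m+2) (by omega), Fq_zero (m+1) (m+2) (by omega),
    Fq_eq (m+2) (m+2) (by omega), Fq_eq (m+1) (m+1) (by omega),
    show m+2 - (m+2) = 0 from by omega, show m+1 - (m+1) = 0 from by omega]
  have e1 : ((m+2).factorial : ℚ) = ((m:ℚ)+2)*((m+1).factorial : ℚ) := by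
    rw [show m+2 = (m+1)+1 from rfl, Nat.factorial_succ]; push_cast; ring
  have e2 : ((m+2+(m+2)).factorial : ℚ)
      = (2*(m:ℚ)+4)*(2*(m:ℚ)+3)*((m+1+(m+1)).factorial : ℚ) := by
    rw [show m+2+(m+2) = (m+1+(m+1))+1+1 from by omega, Nat.factorial_succ, Nat.factorial_succ]
    push_cast; ring
  rw [e1, e2]
  have n1 := fac_ne (m+1); have n2 := fac_ne (m+1+(m+1))
  push_cast
  field_simp
  ring

lemma key (m k : ℕ) :
    ((m:ℚ)+2)^2 * Fq (m+2) k - (11*((m:ℚ)+1)^2+11*((m:ℚ)+1)+3) * Fq (m+1) k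
      - ((m:ℚ)+1)^2 * Fq m k
    = g m k - (if k = 0 then 0 else g m (k-1)) := by
  rcases k with _ | j
  · simp only [if_pos rfl, g, Fq, Nat.choose_zero_right, Nat.add_zero, Nat.cast_one,
      Nat.cast_zero, sub_zero]
    push_cast
    ring
  · simp only [if_neg (Nat.succ_ne_zero j), Nat.succ_sub_one]
    rcases (show m+2 ≤ j ∨ j = m+1 ∨ j = m ∨ j+1 ≤ m from by omega) with hj | rfl | rfl | hj
    · rw [Fq_zero (m+2) (j+1) (by omega), Fq_zero (m+1) (j+1) (by omega),
        Fq_zero m (j+1) (by omega)]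
      unfold g
      rw [Fq_zero (m+1) (j+1) (by omega), Fq_zero (m+1) j (by omega)]
      ring
    · exact caseC m
    · exact caseB j
    · obtain ⟨d, rfl⟩ : ∃ d, m = j + 1 + d := ⟨m - (j+1), by omega⟩
      unfold g
      rw [Fq_eq (j+1+d+2) (j+1) (by omega), Fq_eq (j+1+d+1) (j+1) (by omega),
        Fq_eq (j+1+d) (j+1) (by omega), Fq_eq (j+1+d+1) j (by omega),
        show j+1+d+2 - (j+1) = d+2 from by omega,
        show j+1+d+1 - (j+1) = d+1 from by omega,
        show j+1+d - (j+1) = d from by omega,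
        show j+1+d+1 - j = d+2 from by omega]
      have e1 : ((j+1+d+2).factorial : ℚ) = ((j:ℚ)+d+3)*((j:ℚ)+d+2)*((j+1+d).factorial : ℚ) := by
        rw [show j+1+d+2 = (j+1+d+1)+1 from rfl, Nat.factorial_succ, Nat.factorial_succ]
        push_cast; ring
      have e2 : ((j+1+d+1).factorial : ℚ) = ((j:ℚ)+d+2)*((j+1+d).factorial : ℚ) := by
        rw [Nat.factorial_succ]; push_cast; ring
      have e3 : ((j+1+d+2+(j+1)).factorial : ℚ)
          = (2*(j:ℚ)+d+4)*(2*(j:ℚ)+d+3)*((j+1+d+(j+1)).factorial : ℚ) := by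
        rw [show j+1+d+2+(j+1) = (j+1+d+(j+1))+1+1 from by omega, Nat.factorial_succ,
          Nat.factorial_succ]
        push_cast; ring
      have e4 : ((j+1+d+1+(j+1)).factorial : ℚ)
          = (2*(j:ℚ)+d+3)*((j+1+d+(j+1)).factorial : ℚ) := by
        rw [show j+1+d+1+(j+1) = (j+1+d+(j+1))+1 from by omega, Nat.factorial_succ]
        push_cast; ring
      have e5 : ((j+1+d+1+j).factorial : ℚ) = (2*(j:ℚ)+d+2)*((j+1+d+j).factorial : ℚ) := by
        rw [show j+1+d+1+j = (j+1+d+j)+1 from by omega, Nat.factorial_succ]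
        push_cast; ring
      have e6 : ((j+1+d+(j+1)).factorial : ℚ) = (2*(j:ℚ)+d+2)*((j+1+d+j).factorial : ℚ) := by
        rw [show j+1+d+(j+1) = (j+1+d+j)+1 from by omega, Nat.factorial_succ]
        push_cast; ring
      have e7 : (((j+1).factorial : ℚ)) = ((j:ℚ)+1)*(j.factorial : ℚ) := by
        rw [Nat.factorial_succ]; push_cast; ring
      have e8 : (((d+2).factorial : ℚ)) = ((d:ℚ)+2)*((d:ℚ)+1)*(d.factorial : ℚ) := by
        rw [show d+2 = (d+1)+1 from rfl, Nat.factorial_succ, Nat.factorial_succ]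
        push_cast; ring
      have e9 : (((d+1).factorial : ℚ)) = ((d:ℚ)+1)*(d.factorial : ℚ) := by
        rw [Nat.factorial_succ]; push_cast; ring
      rw [e1, e3, e2, e4, e5, e6, e7, e8, e9]
      have n1 := fac_ne j; have n2 := fac_ne d; have n3 := fac_ne (j+1+d)
      have n4 := fac_ne (j+1+d+j)
      push_cast
      field_simp
      ring

lemma aperyB_cast (n : ℕ) : ((aperyB n : ℤ) : ℚ) = ∑ k ∈ Finset.range (n+1), Fq n k := by
  simp only [aperyB, Int.cast_sum, Int.cast_mul, Int.cast_pow, Int.cast_natCast, Fq]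

lemma apery_rec (m : ℕ) :
    ((m:ℚ)+2)^2 * ((aperyB (m+2) : ℤ) : ℚ)
      = (11*((m:ℚ)+1)^2+11*((m:ℚ)+1)+3) * ((aperyB (m+1) : ℤ) : ℚ)
        + ((m:ℚ)+1)^2 * ((aperyB m : ℤ) : ℚ) := by
  have g0 : g m (m+2) = 0 := by simp [g, Fq_zero (m+1) (m+2) (by omega)]
  have tele : ∑ k ∈ range (m+3), (g m k - if k = 0 then 0 else g m (k-1)) = 0 := by
    have h : ∀ k, (g m k - if k = 0 then 0 else g m (k-1))
        = (fun k => if k = 0 then (0:ℚ) else g m (k-1)) (k+1)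
          - (fun k => if k = 0 then (0:ℚ) else g m (k-1)) k := by
      intro k; cases k <;> simp
    rw [Finset.sum_congr rfl (fun k _ => h k)]
    have hts := Finset.sum_range_sub (fun k => if k = 0 then (0:ℚ) else g m (k-1)) (m+3)
    rw [hts]
    simpa using g0
  have hsum : ∑ k ∈ range (m+3),
      (((m:ℚ)+2)^2 * Fq (m+2) k - (11*((m:ℚ)+1)^2+11*((m:ℚ)+1)+3) * Fq (m+1) k
        - ((m:ℚ)+1)^2 * Fq m k) = 0 := by
    rw [Finset.sum_congr rfl (fun k _ => key m k), tele]
  rw [Finset.sum_sub_distrib, Finset.sum_sub_distrib, ← Finset.mul_sum, ← Finset.mul_sum,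
    ← Finset.mul_sum] at hsum
  have s2 : ∑ k ∈ range (m+3), Fq (m+2) k = ((aperyB (m+2) : ℤ) : ℚ) := by
    rw [aperyB_cast]
  have s1 : ∑ k ∈ range (m+3), Fq (m+1) k = ((aperyB (m+1) : ℤ) : ℚ) := by
    rw [Finset.sum_range_succ, Fq_zero (m+1) (m+2) (by omega), add_zero, aperyB_cast]
  have s0 : ∑ k ∈ range (m+3), Fq m k = ((aperyB m : ℤ) : ℚ) := by
    rw [Finset.sum_range_succ, Finset.sum_range_succ, Fq_zero m (m+2) (by omega),
      Fq_zero m (m+1) (by omega), add_zero, add_zero, aperyB_cast]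
  rw [s2, s1, s0] at hsum
  linarith

/-- For a Zagier triple `(A,B,C)`, the recurrence
`(n+1)² u_{n+1} - (An²+An+B) u_n + C n² u_{n-1} = 0` with `u 0 = 1` (and `u_{-1} = 0`)
determines the rational sequence uniquely, `u 1 = B`, and for `(A,B,C) = (11,3,-1)` the
solution is the Apéry sequence `b`. -/
theorem zagier_recurrence_unique (A B C : ℤ) (u : ℕ → ℚ) (h0 : u 0 = 1)
    (hrec : ∀ n : ℕ,
      ((n : ℚ) + 1) ^ 2 * u (n + 1) - ((A : ℚ) * n ^ 2 + A * n + B) * u n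
        + (C : ℚ) * n ^ 2 * (if n = 0 then 0 else u (n - 1)) = 0) :
    (∀ v : ℕ → ℚ, v 0 = 1 →
      (∀ n : ℕ,
        ((n : ℚ) + 1) ^ 2 * v (n + 1) - ((A : ℚ) * n ^ 2 + A * n + B) * v n
          + (C : ℚ) * n ^ 2 * (if n = 0 then 0 else v (n - 1)) = 0) → v = u) ∧
      u 1 = B ∧
      (A = 11 → B = 3 → C = -1 → ∀ n : ℕ, u n = (aperyB n : ℚ)) := by
  have uniq : ∀ v : ℕ → ℚ, v 0 = 1 →
      (∀ n : ℕ,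
        ((n : ℚ) + 1) ^ 2 * v (n + 1) - ((A : ℚ) * n ^ 2 + A * n + B) * v n
          + (C : ℚ) * n ^ 2 * (if n = 0 then 0 else v (n - 1)) = 0) → v = u := by
    intro v hv0 hvrec
    funext n
    induction n using Nat.strong_induction_on with
    | _ n ih =>
      match n with
      | 0 => rw [hv0, h0]
      | Nat.succ m =>
        have h1 := hrec m
        have h2 := hvrec m
        have em : v m = u m := ih m (Nat.lt_succ_self m)
        have em' : (if m = 0 then (0:ℚ) else v (m-1)) = (if m = 0 then 0 else u (m-1)) := by
          by_cases hm : m = 0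
          · simp [hm]
          · simp only [if_neg hm]
            exact ih (m-1) (by omega)
        rw [em, em'] at h2
        have hne : ((m:ℚ)+1)^2 ≠ 0 := by positivity
        have hmain : ((m:ℚ)+1)^2 * v (m+1) = ((m:ℚ)+1)^2 * u (m+1) := by linarith
        exact mul_left_cancel₀ hne hmain
  refine ⟨uniq, ?_, ?_⟩
  · have h1 := hrec 0
    norm_num [h0] at h1
    linarith
  · intro hA hB hC n
    subst hA; subst hB; subst hC
    have hv0 : ((aperyB 0 : ℤ) : ℚ) = 1 := by norm_num [aperyB]
    have hvrec : ∀ n : ℕ,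
        ((n : ℚ) + 1) ^ 2 * ((aperyB (n+1) : ℤ) : ℚ)
          - (((11:ℤ) : ℚ) * n ^ 2 + ((11:ℤ):ℚ) * n + ((3:ℤ):ℚ)) * ((aperyB n : ℤ) : ℚ)
          + (((-1:ℤ)) : ℚ) * n ^ 2 * (if n = 0 then 0 else ((aperyB (n-1) : ℤ) : ℚ)) = 0 := by
      intro n
      match n with
      | 0 =>
        norm_num [aperyB, Finset.sum_range_succ]
      | Nat.succ m =>
        simp only [Nat.succ_ne_zero, if_neg, Nat.succ_sub_one]
        push_cast
        linear_combination apery_rec m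
    have hv := uniq (fun n => ((aperyB n : ℤ) : ℚ)) hv0 hvrec
    exact (congrFun hv n).symm
end
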